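/- arXiv:1412.3505 — 9 statements merged into one kernel-verified Lean document; each statement's English description precedes it below -/
import Mathlib

section
/- The projective curve over F_2 cut out by C_2 = 0 and Q_2 + L(1,0,1,1)^2 = 0 has no F_4-rational points; that is, there is no nonzero vector (a1,a2,a3,a4) ∈ F_4^4 (where F_4 is the field with 4 elements, containing F_2, and the forms are evaluated via the inclusion F_2 ⊆ F_4) satisfying both C_2(a1,a2,a3,a4) = 0 and Q_2(a1,a2,a3,a4) + (a1 + a3 + a4)^2 = 0. -/
set_option maxHeartbeats 4000000

theorem stirpe_curve_no_F4_points :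
    ¬ ∃ a1 a2 a3 a4 : GaloisField 2 2,
      (¬ (a1 = 0 ∧ a2 = 0 ∧ a3 = 0 ∧ a4 = 0)) ∧
      a2^3 + a1*a3^2 + a2^2*a3 + a2^2*a4 + a1^3 + a3^2*a4 + a1^2*a2 + a2*a4^2 = 0 ∧ a1*a2 + a1*a3 + a1*a4 + a2*a4 + (a1 + a3 + a4)^2 = 0 := by
  rintro ⟨a1, a2, a3, a4, hne, hC, hQ⟩
  haveI : Fintype (GaloisField 2 2) := Fintype.ofFinite _
  have hcard : Fintype.card (GaloisField 2 2) = 4 := by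
    rw [← Nat.card_eq_fintype_card, GaloisField.card (p := 2) (n := 2) (by norm_num)]; norm_num
  have htwo : (2 : GaloisField 2 2) = 0 := by
    have := CharP.cast_eq_zero (GaloisField 2 2) 2
    exact_mod_cast this
  have h1 : a1 ^ 4 = a1 := by have := FiniteField.pow_card a1; rwa [hcard] at this
  have h2 : a2 ^ 4 = a2 := by have := FiniteField.pow_card a2; rwa [hcard] at this
  have h3 : a3 ^ 4 = a3 := by have := FiniteField.pow_card a3; rwa [hcard] at this
  have h4 : a4 ^ 4 = a4 := by have := FiniteField.pow_card a4; rwa [hcard] at this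
  apply hne
  refine ⟨?_, ?_, ?_, ?_⟩
  · linear_combination (a4^4 + a3 + a2 + a2*a3*a4^2 + a2*a3^3 + a2^2*a4^2 + a2^2*a3*a4 + a2^4 + a1*a3^3 + a1*a2*a4^2 + a1*a2^2*a4 + a1*a2^2*a3 + a1*a2^3 + a1^2*a4^2 + a1^2*a3*a4) * hC + (a4^2 + a4^5 + a3*a4^4 + a3^2 + a3^3*a4^2 + a3^4*a4 + a3^5 + a2*a3 + a2*a3*a4^3 + a2*a3^2*a4^2 + a2*a3^3*a4 + a2^2 + a2^2*a4^3 + a2^2*a3*a4^2 + a2^2*a3^2*a4 + a2^3*a3*a4 + a1*a4 + a1*a3^3*a4 + a1*a2*a3^2*a4 + a1*a2^2*a4^2 + a1*a2^2*a3*a4 + a1*a2^2*a3^2 + a1*a2^3*a3 + a1*a2^4 + a1^2 + a1^2*a4^3 + a1^2*a3*a4^2 + a1^2*a2*a4^2 + a1^2*a2*a3*a4 + a1^2*a2^2*a3 + a1^2*a2^3) * hQ + (1 + a4^3 + a3*a4^2 + a3^3 + a2*a4^2 + a2^2*a4 + a1*a4^2 + a1*a3*a4) * h1 + (a4^3 +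 a3^3 + a2*a3*a4 + a2^2*a4 + a2^2*a3 + a2^3 + a1*a3^2 + a1*a2*a4 + a1*a2^2) * h2 + (a4^3 + a3^2*a4 + a3^3 + a2*a3*a4 + a2^2*a4 + a2^3 + a1*a3^2 + a1*a2*a4) * h3 + (a4^3 + a3*a4^2 + a2*a3^2 + a2^3 + a1*a4^2 + a1*a2*a4 + a1*a2^2) * h4 + (- a4^7 - 2*a3*a4^6 - a3^2*a4^2 - 2*a3^2*a4^5 - a3^3*a4 - a3^3*a4^4 - 2*a3^4*a4^3 - 2*a3^5*a4^2 - 2*a3^6*a4 - a3^7 - a2*a4^6 - a2*a3*a4^2 - a2*a3*a4^5 - a2*a3^2*a4 - 2*a2*a3^2*a4^4 - 3*a2*a3^3*a4^3 - 2*a2*a3^4*a4^2 - 2*a2*a3^5*a4 - a2^2*a4^2 - a2^2*a4^5 - a2^2*a3*a4 - 3*a2^2*a3*a4^4 - a2^2*a3^2 - 3*a2^2*a3^2*a4^3 - 3*a2^2*a3^3*a4^2 - a2^2*a3^4*a4 - 2*a2^3*a4^4 - 2*a2^3*a3*a4^3 - 2*a2^3*a3^2*a4^2 - a2^3*a3^3*a4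 - a2^3*a3^4 - a2^4*a4^3 - 2*a2^4*a3*a4^2 - a2^4*a3^2*a4 - a2^4*a3^3 - a2^5*a4^2 - a2^5*a3*a4 - a2^6*a4 - a2^6*a3 - a2^7 + a1 - a1*a4^3 - 2*a1*a4^6 - 2*a1*a3*a4^2 - 3*a1*a3*a4^5 - 2*a1*a3^2*a4 - 2*a1*a3^2*a4^4 - a1*a3^3 - 2*a1*a3^3*a4^3 - 4*a1*a3^4*a4^2 - 4*a1*a3^5*a4 - 2*a1*a3^6 - a1*a2*a4^5 - a1*a2*a3*a4 - 2*a1*a2*a3*a4^4 - 2*a1*a2*a3^2 - 4*a1*a2*a3^2*a4^3 - 6*a1*a2*a3^3*a4^2 - 3*a1*a2*a3^4*a4 - a1*a2*a3^5 - 3*a1*a2^2*a4^4 - 2*a1*a2^2*a3 - 5*a1*a2^2*a3*a4^3 - 7*a1*a2^2*a3^2*a4^2 - 5*a1*a2^2*a3^3*a4 - a1*a2^2*a3^4 - 2*a1*a2^3*a4^3 - 4*a1*a2^3*a3*a4^2 - 4*a1*a2^3*a3^2*a4 - a1*a2^3*a3^3 - 2*a1*a2^4*a4^2 - 3*a1*a2^4*a3*a4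 - 2*a1*a2^4*a3^2 - 2*a1*a2^5*a4 - a1*a2^5*a3 - a1*a2^6 - 2*a1^2*a4^2 - a1^2*a4^5 - 2*a1^2*a3*a4 - 2*a1^2*a3*a4^4 - a1^2*a3^2 - 2*a1^2*a3^2*a4^3 - 3*a1^2*a3^3*a4^2 - 2*a1^2*a3^4*a4 - a1^2*a3^5 - a1^2*a2*a4 - 2*a1^2*a2*a4^4 - a1^2*a2*a3 - 3*a1^2*a2*a3*a4^3 - 4*a1^2*a2*a3^2*a4^2 - 3*a1^2*a2*a3^3*a4 - a1^2*a2^2 - 3*a1^2*a2^2*a4^3 - 6*a1^2*a2^2*a3*a4^2 - 6*a1^2*a2^2*a3^2*a4 - 3*a1^2*a2^2*a3^3 - 2*a1^2*a2^3*a4^2 - 5*a1^2*a2^3*a3*a4 - 3*a1^2*a2^3*a3^2 - 2*a1^2*a2^4*a4 - 2*a1^2*a2^4*a3 - a1^2*a2^5 - 2*a1^3*a4 - 2*a1^3*a4^4 - 2*a1^3*a3 - 3*a1^3*a3*a4^3 - 2*a1^3*a3^2*a4^2 - a1^3*a3^3*a4 - a1^3*a2 - 2*a1^3*a2*a4^3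 - 4*a1^3*a2*a3*a4^2 - 2*a1^3*a2*a3^2*a4 - a1^3*a2*a3^3 - 2*a1^3*a2^2*a4^2 - 3*a1^3*a2^2*a3*a4 - 2*a1^3*a2^2*a3^2 - 2*a1^3*a2^3*a4 - 3*a1^3*a2^3*a3 - 2*a1^3*a2^4 - a1^4 - a1^4*a4^3 - a1^4*a3*a4^2 - a1^4*a3^3 - 2*a1^4*a2*a4^2 - a1^4*a2*a3*a4 - a1^4*a2^2*a4 - a1^4*a2^2*a3 - a1^4*a2^3 - a1^5*a4^2 - a1^5*a3*a4) * htwo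
  · linear_combination (a4 + a4^4 + a3 + a3*a4^3 + a3^3*a4 + a3^4 + a2^4 + a1 + a1*a4^3 + a1*a3^3 + a1*a2*a4^2 + a1*a2^2*a4 + a1*a2^2*a3 + a1^2*a3*a4 + a1^2*a2^2) * hC + (a4^2 + a4^5 + a3*a4 + a3^3*a4^2 + a3^4*a4 + a2*a3 + a2*a3*a4^3 + a2*a3^2*a4^2 + a2*a3^3*a4 + a2*a3^4 + a2^2 + a2^2*a4^3 + a2^2*a3^2*a4 + a2^3*a3*a4 + a2^3*a3^2 + a2^5 + a1*a3*a4^3 + a1*a3^2*a4^2 + a1*a3^3*a4 + a1*a2*a3^3 + a1*a2^2*a3*a4 + a1*a2^2*a3^2 + a1*a2^4 + a1^2 + a1^2*a4^3 + a1^2*a3*a4^2 + a1^2*a3^3 + a1^2*a2*a3*a4 + a1^2*a2*a3^2 + a1^2*a2^2*a4 + a1^2*a2^2*a3) * hQ + (a3*a4^2 + a2*a4^2 + a2*a3^2 + a2^3 + a1*a3*a4 + a1*a2^2) * h1 + (1 + a3*a4^2 + a2*a3^2 + a2^2*a3 + a2^3 + a1*a4^2 + a1*a3*a4 + a1*a2*a4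 + a1*a2^2) * h2 + (a4^3 + a2*a3*a4 + a2*a3^2 + a2^2*a3 + a1*a4^2 + a1*a3^2 + a1*a2*a4 + a1*a2^2) * h3 + (a4^3 + a2*a3^2 + a2^2*a3 + a1*a4^2 + a1*a3^2 + a1*a2^2) * h4 + (- a4^7 - a3*a4^3 - a3*a4^6 - 2*a3^2*a4^2 - a3^2*a4^5 - a3^3*a4 - a3^3*a4^4 - 2*a3^4*a4^3 - 2*a3^5*a4^2 - a3^6*a4 + a2 - a2*a4^3 - a2*a4^6 - a2*a3*a4^2 - a2*a3*a4^5 - 2*a2*a3^2*a4^4 - 3*a2*a3^3*a4^3 - 3*a2*a3^4*a4^2 - 2*a2*a3^5*a4 - a2*a3^6 - a2^2*a4^2 - a2^2*a4^5 - 2*a2^2*a3*a4 - 3*a2^2*a3*a4^4 - 2*a2^2*a3^2*a4^3 - 2*a2^2*a3^3*a4^2 - 2*a2^2*a3^4*a4 - a2^2*a3^5 - a2^3*a4 - a2^3*a4^4 - a2^3*a3*a4^3 - 2*a2^3*a3^2*a4^2 - 2*a2^3*a3^3*a4 - a2^3*a3^4 - a2^4*a3*a4^2 - a2^4*a3^2*a4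 - a2^5*a4^2 - a2^5*a3*a4 - a2^5*a3^2 - a2^6*a4 - a2^6*a3 - a2^7 - a1*a4^3 - 2*a1*a4^6 - 2*a1*a3*a4^2 - 2*a1*a3*a4^5 - 2*a1*a3^2*a4 - 3*a1*a3^2*a4^4 - 4*a1*a3^3*a4^3 - 5*a1*a3^4*a4^2 - 3*a1*a3^5*a4 - a1*a3^6 - a1*a2*a4^5 - a1*a2*a3*a4 - 2*a1*a2*a3*a4^4 - a1*a2*a3^2 - 4*a1*a2*a3^2*a4^3 - 5*a1*a2*a3^3*a4^2 - 5*a1*a2*a3^4*a4 - 2*a1*a2*a3^5 - a1*a2^2*a4 - 3*a1*a2^2*a4^4 - 2*a1*a2^2*a3 - 3*a1*a2^2*a3*a4^3 - 4*a1*a2^2*a3^2*a4^2 - 5*a1*a2^2*a3^3*a4 - 2*a1*a2^2*a3^4 - 2*a1*a2^3*a4^3 - 3*a1*a2^3*a3*a4^2 - 4*a1*a2^3*a3^2*a4 - 2*a1*a2^3*a3^3 - 2*a1*a2^4*a4^2 - 3*a1*a2^4*a3*a4 - 2*a1*a2^4*a3^2 - 3*a1*a2^5*a4 - 2*a1*a2^5*a3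 - a1*a2^6 - a1^2*a4^2 - a1^2*a4^5 - a1^2*a3*a4 - 3*a1^2*a3*a4^4 - a1^2*a3^2 - 5*a1^2*a3^2*a4^3 - 5*a1^2*a3^3*a4^2 - 3*a1^2*a3^4*a4 - a1^2*a3^5 - a1^2*a2*a4 - a1^2*a2*a4^4 - a1^2*a2*a3 - 3*a1^2*a2*a3*a4^3 - 3*a1^2*a2*a3^2*a4^2 - 5*a1^2*a2*a3^3*a4 - 3*a1^2*a2*a3^4 - a1^2*a2^2*a4^3 - 4*a1^2*a2^2*a3*a4^2 - 7*a1^2*a2^2*a3^2*a4 - 3*a1^2*a2^2*a3^3 - a1^2*a2^3*a4^2 - 2*a1^2*a2^3*a3*a4 - a1^2*a2^3*a3^2 - 2*a1^2*a2^4*a4 - 2*a1^2*a2^4*a3 - 2*a1^2*a2^5 - 2*a1^3*a4 - 2*a1^3*a4^4 - 2*a1^3*a3 - 4*a1^3*a3*a4^3 - 2*a1^3*a3^2*a4^2 - 3*a1^3*a3^3*a4 - 2*a1^3*a3^4 - a1^3*a2 - a1^3*a2*a4^3 - 2*a1^3*a2*a3*a4^2 - 3*a1^3*a2*a3^2*a4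 - 3*a1^3*a2*a3^3 - 2*a1^3*a2^2*a4^2 - 4*a1^3*a2^2*a3*a4 - 3*a1^3*a2^2*a3^2 - a1^3*a2^3*a4 - a1^3*a2^3*a3 - a1^3*a2^4 - a1^4 - a1^4*a4^3 - a1^4*a3*a4^2 - a1^4*a3^3 - a1^4*a2*a4^2 - a1^4*a2*a3*a4 - a1^4*a2*a3^2 - a1^4*a2^2*a4 - a1^4*a2^2*a3 - a1^4*a2^3 - a1^5*a3*a4 - a1^5*a2^2) * htwo
  · linear_combination (a4 + a3*a4^3 + a3^3*a4 + a2 + a2*a4^3 + a2*a3*a4^2 + a2^3*a3 + a2^4 + a1 + a1*a2*a4^2 + a1*a2^2*a4 + a1^2*a4^2 + a1^2*a2*a4 + a1^2*a2^2) * hC + (a3*a4 + a3*a4^4 + a3^2 + a3^2*a4^3 + a3^4*a4 + a2^2 + a2^2*a4^3 + a2^2*a3*a4^2 + a2^3*a3^2 + a1*a3 + a1*a3*a4^3 + a1*a3^3*a4 + a1*a3^4 + a1*a2 + a1*a2*a4^3 + a1*a2^3*a4 + a1^2 + a1^2*a3^2*a4 + a1^2*a3^3 + a1^2*a2*a3*a4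 + a1^2*a2*a3^2 + a1^2*a2^2*a4 + a1^2*a2^3) * hQ + (a3^2*a4 + a3^3 + a2*a3*a4 + a2*a3^2 + a2^2*a4 + a1*a4^2 + a1*a2*a4 + a1*a2^2) * h1 + (a4^3 + a2*a4^2 + a2*a3*a4 + a2*a3^2 + a2^2*a4 + a2^3 + a1*a4^2 + a1*a3*a4 + a1*a2*a4) * h2 + (1 + a3*a4^2 + a3^2*a4 + a2*a4^2 + a2^2*a4 + a2^3 + a1*a3*a4 + a1*a3^2) * h3 + (a3*a4^2 + a3^2*a4 + a2^2*a3 + a1*a2*a4 + a1*a2^2) * h4 + (a3 - a3*a4^6 - a3^2*a4^2 - 2*a3^2*a4^5 - a3^3*a4 - 2*a3^3*a4^4 - a3^4 - a3^4*a4^3 - 2*a3^5*a4^2 - a3^6*a4 - a2*a3*a4^5 - a2*a3^2*a4 - a2*a3^2*a4^4 - a2*a3^3*a4^3 - a2*a3^4*a4^2 - a2^2*a4^2 - a2^2*a4^5 - 3*a2^2*a3*a4^4 - 2*a2^2*a3^2*a4^3 - a2^2*a3^3*a4^2 - a2^2*a3^4*a4 - a2^3*a4 - a2^3*a4^4 -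 2*a2^3*a3*a4^3 - a2^3*a3^2*a4^2 - 2*a2^3*a3^3*a4 - a2^3*a3^4 - a2^4*a4^3 - a2^4*a3*a4^2 - a2^4*a3^2*a4 - a2^5*a4^2 - a2^5*a3*a4 - a2^5*a3^2 - a2^6*a4 - a2^6*a3 - a2^7 - 2*a1*a3*a4^2 - 2*a1*a3*a4^5 - 4*a1*a3^2*a4 - 4*a1*a3^2*a4^4 - a1*a3^3 - 3*a1*a3^3*a4^3 - 3*a1*a3^4*a4^2 - 4*a1*a3^5*a4 - a1*a3^6 - a1*a2*a4^5 - a1*a2*a3*a4 - 2*a1*a2*a3*a4^4 - a1*a2*a3^2 - 2*a1*a2*a3^2*a4^3 - a1*a2*a3^3*a4^2 - a1*a2*a3^4*a4 - a1*a2^2*a4 - 3*a1*a2^2*a4^4 - 2*a1*a2^2*a3 - 3*a1*a2^2*a3*a4^3 - 2*a1*a2^2*a3^2*a4^2 - a1*a2^3 - 2*a1*a2^3*a4^3 - 2*a1*a2^3*a3*a4^2 - 2*a1*a2^3*a3^2*a4 - 2*a1*a2^3*a3^3 - 2*a1*a2^4*a4^2 - a1*a2^4*a3*a4 - a1*a2^4*a3^2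 - a1*a2^5*a4 - 3*a1^2*a3*a4 - 2*a1^2*a3*a4^4 - 3*a1^2*a3^2 - 3*a1^2*a3^2*a4^3 - 3*a1^2*a3^3*a4^2 - 5*a1^2*a3^4*a4 - 2*a1^2*a3^5 - 2*a1^2*a2*a4 - 2*a1^2*a2*a4^4 - 2*a1^2*a2*a3 - 3*a1^2*a2*a3*a4^3 - 3*a1^2*a2*a3^2*a4^2 - 3*a1^2*a2*a3^3*a4 - a1^2*a2*a3^4 - a1^2*a2^2 - 3*a1^2*a2^2*a4^3 - 3*a1^2*a2^2*a3*a4^2 - 2*a1^2*a2^2*a3^2*a4 - 4*a1^2*a2^3*a4^2 - 3*a1^2*a2^3*a3*a4 - a1^2*a2^3*a3^2 - 2*a1^2*a2^4*a4 - a1^2*a2^4*a3 - a1^2*a2^5 - 2*a1^3*a4 - 2*a1^3*a3 - a1^3*a3*a4^3 - 2*a1^3*a3^2*a4^2 - 4*a1^3*a3^3*a4 - 2*a1^3*a3^4 - 2*a1^3*a2 - a1^3*a2*a4^3 - 2*a1^3*a2*a3*a4^2 - 4*a1^3*a2*a3^2*a4 - 2*a1^3*a2*a3^3 - 2*a1^3*a2^2*a4^2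 - 2*a1^3*a2^2*a3*a4 - a1^3*a2^2*a3^2 - 3*a1^3*a2^3*a4 - 2*a1^3*a2^3*a3 - a1^3*a2^4 - a1^4 - a1^4*a3^2*a4 - a1^4*a3^3 - a1^4*a2*a4^2 - a1^4*a2*a3*a4 - a1^4*a2*a3^2 - 2*a1^4*a2^2*a4 - a1^4*a2^3 - a1^5*a4^2 - a1^5*a2*a4 - a1^5*a2^2) * htwo
  · linear_combination (a4^4 + a3 + a3^2*a4^2 + a3^3*a4 + a3^4 + a2 + a2*a3*a4^2 + a2*a3^2*a4 + a2^2*a4^2 + a2^3*a4 + a2^4 + a1*a2*a3*a4 + a1*a2^2*a4 + a1^2*a3*a4 + a1^2*a2*a4) * hC + (a4^5 + a3*a4^4 + a3^2 + a3^2*a4^3 + a3^4*a4 + a3^5 + a2*a3 + a2*a3*a4^3 + a2*a3^2*a4^2 + a2*a3^3*a4 + a2^2*a4^3 + a2^2*a3^2*a4 + a2^2*a3^3 + a2^3*a4^2 + a2^3*a3*a4 + a2^4*a4 + a2^4*a3 + a2^5 + a1*a4^4 + a1*a3 + a1*a3*a4^3 + a1*a3^2*a4^2 + a1*a2 + a1*a2*a4^3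 + a1*a2*a3*a4^2 + a1*a2*a3^2*a4 + a1*a2*a3^3 + a1*a2^2*a4^2 + a1*a2^3*a3 + a1^2*a3*a4^2 + a1^2*a3^2*a4 + a1^2*a3^3 + a1^2*a2*a4^2 + a1^2*a2^2*a4 + a1^2*a2^3) * hQ + (a3*a4^2 + a3^2*a4 + a3^3 + a2*a4^2 + a2^2*a4 + a2^3 + a1*a3*a4 + a1*a2*a4) * h1 + (a3^2*a4 + a3^3 + a2*a4^2 + a2*a3^2 + a2^2*a4 + a2^2*a3 + a2^3 + a1*a4^2 + a1*a2*a4 + a1*a2^2) * h2 + (a4^3 + a3^3 + a2^2*a4 + a2^3 + a1*a4^2 + a1*a3*a4 + a1*a2^2) * h3 + (1 + a4^3 + a3*a4^2 + a3^2*a4 + a3^3 + a2*a3^2 + a2^2*a3 + a1*a3*a4 + a1*a3^2 + a1*a2*a4 + a1*a2^2) * h4 + (a4 - a4^7 + a3*a4^3 - 2*a3*a4^6 - 3*a3^2*a4^5 - a3^3*a4 - 2*a3^3*a4^4 - 2*a3^4*a4^3 - 2*a3^5*a4^2 - 2*a3^6*a4 - a3^7 - a2*a4^6 - a2*a3*a4^2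 - a2*a3*a4^5 - a2*a3^2*a4 - 3*a2*a3^2*a4^4 - 3*a2*a3^3*a4^3 - 3*a2*a3^4*a4^2 - a2*a3^5*a4 - a2^2*a4^5 - 3*a2^2*a3*a4^4 - 3*a2^2*a3^2*a4^3 - 3*a2^2*a3^3*a4^2 - 3*a2^2*a3^4*a4 - a2^2*a3^5 - 2*a2^3*a4^4 - 2*a2^3*a3*a4^3 - 4*a2^3*a3^2*a4^2 - 2*a2^3*a3^3*a4 - a2^3*a3^4 - 2*a2^4*a4^3 - 3*a2^4*a3*a4^2 - 3*a2^4*a3^2*a4 - a2^4*a3^3 - 3*a2^5*a4^2 - 2*a2^5*a3*a4 - a2^5*a3^2 - 2*a2^6*a4 - a2^6*a3 - a2^7 - 2*a1*a4^6 + a1*a3*a4^2 - 5*a1*a3*a4^5 - a1*a3^2*a4 - 6*a1*a3^2*a4^4 - 2*a1*a3^3 - 3*a1*a3^3*a4^3 - 3*a1*a3^4*a4^2 - 4*a1*a3^5*a4 - 2*a1*a3^6 + a1*a2*a4^2 - 2*a1*a2*a4^5 - 3*a1*a2*a3*a4 - 4*a1*a2*a3*a4^4 - 3*a1*a2*a3^2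 - 6*a1*a2*a3^2*a4^3 - 6*a1*a2*a3^3*a4^2 - 4*a1*a2*a3^4*a4 - a1*a2*a3^5 + a1*a2^2*a4 - 3*a1*a2^2*a4^4 - 4*a1*a2^2*a3*a4^3 - 4*a1*a2^2*a3^2*a4^2 - 4*a1*a2^2*a3^3*a4 - 2*a1*a2^2*a3^4 + a1*a2^3 - 3*a1*a2^3*a4^3 - 4*a1*a2^3*a3*a4^2 - 4*a1*a2^3*a3^2*a4 - a1*a2^3*a3^3 - 3*a1*a2^4*a4^2 - 5*a1*a2^4*a3*a4 - 2*a1*a2^4*a3^2 - 3*a1*a2^5*a4 - 2*a1*a2^5*a3 - a1*a2^6 - 2*a1^2*a4^5 - a1^2*a3*a4 - 4*a1^2*a3*a4^4 - 2*a1^2*a3^2 - 5*a1^2*a3^2*a4^3 - 4*a1^2*a3^3*a4^2 - 2*a1^2*a3^4*a4 - a1^2*a3^5 - a1^2*a2*a4 - 3*a1^2*a2*a4^4 - 3*a1^2*a2*a3 - 6*a1^2*a2*a3*a4^3 - 6*a1^2*a2*a3^2*a4^2 - 5*a1^2*a2*a3^3*a4 - 2*a1^2*a2*a3^4 - a1^2*a2^2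 - 4*a1^2*a2^2*a4^3 - 4*a1^2*a2^2*a3*a4^2 - 3*a1^2*a2^2*a3^2*a4 - a1^2*a2^2*a3^3 - 3*a1^2*a2^3*a4^2 - 4*a1^2*a2^3*a3*a4 - 2*a1^2*a2^3*a3^2 - 2*a1^2*a2^4*a4 - a1^2*a2^4*a3 - a1^2*a2^5 - a1^3*a4^4 - a1^3*a3 - 2*a1^3*a3*a4^3 - 4*a1^3*a3^2*a4^2 - 4*a1^3*a3^3*a4 - 2*a1^3*a3^4 - a1^3*a2 - 2*a1^3*a2*a4^3 - 3*a1^3*a2*a3*a4^2 - 2*a1^3*a2*a3^2*a4 - a1^3*a2*a3^3 - 3*a1^3*a2^2*a4^2 - 2*a1^3*a2^2*a3*a4 - 3*a1^3*a2^3*a4 - 2*a1^3*a2^3*a3 - a1^3*a2^4 - a1^4*a3*a4^2 - a1^4*a3^2*a4 - a1^4*a3^3 - a1^4*a2*a4^2 - a1^4*a2*a3*a4 - 2*a1^4*a2^2*a4 - a1^4*a2^3 - a1^5*a3*a4 - a1^5*a2*a4) * htwo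
end

section
/- The projective curve over F_2 cut out by C_2 = 0 and Q_2 + L(1,0,1,1)^2 = 0 has no F_8-rational points; that is, there is no nonzero vector (a1,a2,a3,a4) ∈ F_8^4 (where F_8 is the field with 8 elements, containing F_2, and the forms are evaluated via the inclusion F_2 ⊆ F_8) satisfying both C_2(a1,a2,a3,a4) = 0 and Q_2(a1,a2,a3,a4) + (a1 + a3 + a4)^2 = 0. -/
/-- A concrete field with 8 elements: bit-vector representation of
`F_2[x]/(x^3+x+1)`. -/
structure F8 where
  val : Fin 8
  deriving DecidableEq, Fintype

namespace F8

def add (a b : F8) : F8 := ⟨⟨(a.val.val ^^^ b.val.val) % 8, Nat.mod_lt _ (by norm_num)⟩⟩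

/-- carry-less multiplication followed by reduction mod x^3+x+1 -/
def mul (a b : F8) : F8 :=
  let x := a.val.val
  let y := b.val.val
  -- carryless product (fits in 5 bits)
  let p := ((if x &&& 1 = 1 then y else 0) ^^^
            (if x &&& 2 = 2 then y <<< 1 else 0)) ^^^
            (if x &&& 4 = 4 then y <<< 2 else 0)
  -- reduce degree 4 and 3 terms: x^4 = x^2 + x, x^3 = x + 1
  let p := if p &&& 16 = 16 then p ^^^ 0b10110 else p
  let p := if p &&& 8 = 8 then p ^^^ 0b1011 else p
  ⟨⟨p % 8, Nat.mod_lt _ (by norm_num)⟩⟩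

instance : Zero F8 := ⟨⟨0⟩⟩
instance : One F8 := ⟨⟨1⟩⟩
instance : Add F8 := ⟨add⟩
instance : Mul F8 := ⟨mul⟩
instance : Neg F8 := ⟨id⟩
instance : Inv F8 := ⟨fun a => mul (mul a a) (mul (mul a a) (mul a a))⟩

set_option maxHeartbeats 1000000 in
instance : CommRing F8 where
  add_assoc := by decide
  zero_add := by decide
  add_zero := by decide
  add_comm := by decide
  neg_add_cancel := by decide
  mul_assoc := by decide
  one_mul := by decide
  mul_one := by decide
  left_distrib := by decide
  right_distrib := by decide
  mul_comm := by decide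
  zero_mul := by decide
  mul_zero := by decide
  nsmul := nsmulRec
  zsmul := zsmulRec

set_option maxHeartbeats 1000000 in
instance : Field F8 where
  exists_pair_ne := ⟨⟨0⟩, ⟨1⟩, by decide⟩
  mul_inv_cancel := by decide
  inv_zero := by decide
  nnqsmul := _
  qsmul := _

theorem card_f8 : Fintype.card F8 = 8 := by
  simp [Fintype.card_congr (Equiv.mk F8.val F8.mk (fun _ => rfl) (fun _ => rfl))]

instance : CharP F8 2 := by
  have h := CharP.ringChar_of_prime_eq_zero (R := F8) Nat.prime_two (by decide)
  have := ringChar.charP F8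
  rwa [h] at this

noncomputable instance : Algebra (ZMod 2) F8 := ZMod.algebra _ _

theorem no_points (b1 b2 b3 b4 : F8)
    (h1 : b2^3 + b1*b3^2 + b2^2*b3 + b2^2*b4 + b1^3 + b3^2*b4 + b1^2*b2 + b2*b4^2 = 0)
    (h2 : b1*b2 + b1*b3 + b1*b4 + b2*b4 + (b1 + b3 + b4)^2 = 0) :
    b1 = 0 ∧ b2 = 0 ∧ b3 = 0 ∧ b4 = 0 := by
  revert b1 b2 b3 b4; decide

end F8

theorem stirpe_curve_no_F8_points :
    ¬ ∃ a1 a2 a3 a4 : GaloisField 2 3,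
      (¬ (a1 = 0 ∧ a2 = 0 ∧ a3 = 0 ∧ a4 = 0)) ∧
      a2^3 + a1*a3^2 + a2^2*a3 + a2^2*a4 + a1^3 + a3^2*a4 + a1^2*a2 + a2*a4^2 = 0 ∧ a1*a2 + a1*a3 + a1*a4 + a2*a4 + (a1 + a3 + a4)^2 = 0 := by
  rintro ⟨a1, a2, a3, a4, hne, h1, h2⟩
  have e : F8 ≃ₐ[ZMod 2] GaloisField 2 3 :=
    GaloisField.algEquivGaloisField 2 3 (by simp [Nat.card_eq_fintype_card, F8.card_f8])
  let f : GaloisField 2 3 →+* F8 := e.symm.toRingEquiv.toRingHom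
  have key := F8.no_points (f a1) (f a2) (f a3) (f a4)
    (by simpa [map_add, map_mul, map_pow] using congrArg f h1)
    (by simpa [map_add, map_mul, map_pow] using congrArg f h2)
  have hinj : Function.Injective f := e.symm.injective
  exact hne ⟨by simpa using hinj (by simpa using key.1),
    by simpa using hinj (by simpa using key.2.1),
    by simpa using hinj (by simpa using key.2.2.1),
    by simpa using hinj (by simpa using key.2.2.2)⟩
end

section
/- The projective curve over F_2 cut out by C_2 = 0 and Q_2 + L(1,0,1,1)^2 = 0 has exactly 4 points rational over F_16; equivalently, the set of nonzero vectors (a1,a2,a3,a4) ∈ F_16^4 (where F_16 is the field with 16 elements, containing F_2, and the forms are evaluated via the inclusion F_2 ⊆ F_16) satisfying both C_2(a1,a2,a3,a4) = 0 and Q_2(a1,a2,a3,a4) + (a1 + a3 + a4)^2 = 0 has cardinality exactly 60 (4 projective points, each with 15 nonzero scalar multiples). -/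
/-- A concrete model of the field with 16 elements: `Fin 16` with addition given by `xor` and
multiplication given by a lookup table for `GF(2)[x]/(x^4+x+1)`. -/
def F16 := Fin 16

namespace F16

instance : DecidableEq F16 := inferInstanceAs (DecidableEq (Fin 16))
instance : Fintype F16 := inferInstanceAs (Fintype (Fin 16))

/-- Multiplication table, 4 bits per entry. -/
def T : Nat := 116196760129267793630862849262464326346044543732748708940920453221664288556434379745879494961270582141731748813355742142288220638766218855867759359510984593843506004200114943278699875244065120512813025380665946106619127097398772031257643617143689515450995722003729973585221105779229319991106539050771048038400

/-- Inversion table, 4 bits per entry. -/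
def I : Nat := 9460475325918865680

instance : Zero F16 := ⟨(0 : Fin 16)⟩
instance : One F16 := ⟨(1 : Fin 16)⟩
instance : Add F16 := ⟨fun a b => ⟨(a.val ^^^ b.val) % 16, Nat.mod_lt _ (by norm_num)⟩⟩
instance : Neg F16 := ⟨id⟩
instance : Mul F16 := ⟨fun a b => ⟨(T >>> (4*(a.val*16+b.val))) &&& 15, Nat.lt_succ_of_le Nat.and_le_right⟩⟩
instance : Inv F16 := ⟨fun a => ⟨(I >>> (4*a.val)) &&& 15, Nat.lt_succ_of_le Nat.and_le_right⟩⟩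

set_option maxHeartbeats 1000000 in
instance instACG : AddCommGroup F16 where
  add_assoc := by decide
  zero_add := by decide
  add_zero := by decide
  nsmul := nsmulRec
  zsmul := zsmulRec
  neg_add_cancel := by decide
  add_comm := by decide

set_option maxHeartbeats 4000000 in
instance instField : Field F16 :=
  { instACG with
    mul := Mul.mul
    one := One.one
    inv := Inv.inv
    mul_assoc := by decide
    one_mul := by decide
    mul_one := by decide
    left_distrib := by decide
    right_distrib := by decide
    mul_comm := by decide
    zero_mul := by decide
    mul_zero := by decide
    exists_pair_ne := ⟨0, 1, by decide⟩
    mul_inv_cancel := by decide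
    inv_zero := by decide
    nnqsmul := _
    qsmul := _ }

end F16

section Homogeneity

variable {K : Type*} [CommRing K]

/-- The cubic form. -/
def Cf (a1 a2 a3 a4 : K) : K :=
  a2^3 + a1*a3^2 + a2^2*a3 + a2^2*a4 + a1^3 + a3^2*a4 + a1^2*a2 + a2*a4^2

/-- The quadratic form. -/
def Qf (a1 a2 a3 a4 : K) : K :=
  a1*a2 + a1*a3 + a1*a4 + a2*a4 + (a1 + a3 + a4)^2

lemma Cf_smul (c a1 a2 a3 a4 : K) :
    Cf (c*a1) (c*a2) (c*a3) (c*a4) = c^3 * Cf a1 a2 a3 a4 := by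
  simp only [Cf]; ring

lemma Qf_smul (c a1 a2 a3 a4 : K) :
    Qf (c*a1) (c*a2) (c*a3) (c*a4) = c^2 * Qf a1 a2 a3 a4 := by
  simp only [Qf]; ring

end Homogeneity

open F16 in
set_option maxHeartbeats 4000000 in
/-- Every solution over `F16` has nonzero first coordinate. -/
lemma F16.first_ne_zero : ∀ a2 a3 a4 : F16,
    Cf 0 a2 a3 a4 = 0 → Qf 0 a2 a3 a4 = 0 → a2 = 0 ∧ a3 = 0 ∧ a4 = 0 := by
  decide

open F16 in
set_option maxHeartbeats 4000000 in
set_option maxRecDepth 100000 in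
lemma F16.normalized_count :
    Fintype.card {w : F16 × F16 × F16 // Cf 1 w.1 w.2.1 w.2.2 = 0 ∧ Qf 1 w.1 w.2.1 w.2.2 = 0} = 4 := by
  decide

lemma F16.units_count : Fintype.card {u : F16 // u ≠ 0} = 15 := by decide

/-- The solution set over `F16` has 60 elements. -/
lemma F16.count60 :
    Nat.card {v : F16 × F16 × F16 × F16 |
      v ≠ 0 ∧ Cf v.1 v.2.1 v.2.2.1 v.2.2.2 = 0 ∧ Qf v.1 v.2.1 v.2.2.1 v.2.2.2 = 0} = 60 := by
  have g : ({u : F16 // u ≠ 0} ×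
      {w : F16 × F16 × F16 // Cf 1 w.1 w.2.1 w.2.2 = 0 ∧ Qf 1 w.1 w.2.1 w.2.2 = 0}) ≃
      {v : F16 × F16 × F16 × F16 |
        v ≠ 0 ∧ Cf v.1 v.2.1 v.2.2.1 v.2.2.2 = 0 ∧ Qf v.1 v.2.1 v.2.2.1 v.2.2.2 = 0} := by
    refine Equiv.ofBijective (fun p =>
      ⟨(p.1.1, p.1.1 * p.2.1.1, p.1.1 * p.2.1.2.1, p.1.1 * p.2.1.2.2), ?_, ?_, ?_⟩) ⟨?_, ?_⟩
    · intro h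
      exact p.1.2 (congrArg Prod.fst h)
    · have h0 := p.2.2.1
      have h3 : Cf (p.1.1 * 1) (p.1.1 * p.2.1.1) (p.1.1 * p.2.1.2.1) (p.1.1 * p.2.1.2.2)
          = p.1.1^3 * Cf 1 p.2.1.1 p.2.1.2.1 p.2.1.2.2 := Cf_smul _ _ _ _ _
      rw [mul_one] at h3
      simp [h3, h0]
    · have h0 := p.2.2.2
      have h2 : Qf (p.1.1 * 1) (p.1.1 * p.2.1.1) (p.1.1 * p.2.1.2.1) (p.1.1 * p.2.1.2.2)
          = p.1.1^2 * Qf 1 p.2.1.1 p.2.1.2.1 p.2.1.2.2 := Qf_smul _ _ _ _ _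
      rw [mul_one] at h2
      simp [h2, h0]
    · rintro ⟨⟨u, hu⟩, ⟨⟨w1, w2, w3⟩, hw⟩⟩ ⟨⟨u', hu'⟩, ⟨⟨w1', w2', w3'⟩, hw'⟩⟩ h
      simp only [Subtype.mk.injEq, Prod.mk.injEq] at h ⊢
      obtain ⟨h0, h1, h2, h3⟩ := h
      subst h0
      exact ⟨rfl, mul_left_cancel₀ hu h1, mul_left_cancel₀ hu h2, mul_left_cancel₀ hu h3⟩
    · rintro ⟨⟨a1, a2, a3, a4⟩, hne, hC, hQ⟩
      have ha1 : a1 ≠ 0 := by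
        intro h
        subst h
        obtain ⟨h2, h3, h4⟩ := F16.first_ne_zero a2 a3 a4 hC hQ
        exact hne (by simp [h2, h3, h4, Prod.ext_iff])
      have hCn : Cf 1 (a1⁻¹ * a2) (a1⁻¹ * a3) (a1⁻¹ * a4) = 0 := by
        have h := Cf_smul a1⁻¹ a1 a2 a3 a4
        rw [inv_mul_cancel₀ ha1] at h
        rw [h, hC, mul_zero]
      have hQn : Qf 1 (a1⁻¹ * a2) (a1⁻¹ * a3) (a1⁻¹ * a4) = 0 := by
        have h := Qf_smul a1⁻¹ a1 a2 a3 a4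
        rw [inv_mul_cancel₀ ha1] at h
        rw [h, hQ, mul_zero]
      have hmm : ∀ x : F16, a1 * (a1⁻¹ * x) = x := fun x => by
        rw [← mul_assoc, mul_inv_cancel₀ ha1, one_mul]
      refine ⟨⟨⟨a1, ha1⟩, ⟨(a1⁻¹ * a2, a1⁻¹ * a3, a1⁻¹ * a4), hCn, hQn⟩⟩, ?_⟩
      simp only [Subtype.mk.injEq, Prod.mk.injEq]
      exact ⟨by simp, by simp [hmm], by simp [hmm], by simp [hmm]⟩
  rw [← Nat.card_congr g, Nat.card_prod, Nat.card_eq_fintype_card, Nat.card_eq_fintype_card,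
    F16.units_count, F16.normalized_count]

theorem stirpe_curve_F16_point_count :
    Nat.card {v : GaloisField 2 4 × GaloisField 2 4 × GaloisField 2 4 × GaloisField 2 4 |
      v ≠ 0 ∧
      (fun (a1 a2 a3 a4 : GaloisField 2 4) =>
        a2^3 + a1*a3^2 + a2^2*a3 + a2^2*a4 + a1^3 + a3^2*a4 + a1^2*a2 + a2*a4^2 = 0 ∧ a1*a2 + a1*a3 + a1*a4 + a2*a4 + (a1 + a3 + a4)^2 = 0) v.1 v.2.1 v.2.2.1 v.2.2.2} = 60 := by
  haveI : Fintype (GaloisField 2 4) := Fintype.ofFinite _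
  have hcard : Fintype.card (GaloisField 2 4) = Fintype.card F16 := by
    have h1 : Nat.card (GaloisField 2 4) = 2 ^ 4 := GaloisField.card 2 4 (by norm_num)
    rw [← Nat.card_eq_fintype_card, h1]
    decide
  let e : GaloisField 2 4 ≃+* F16 := FiniteField.ringEquivOfCardEq hcard
  have hz : ∀ x : GaloisField 2 4, x = 0 ↔ e x = 0 := fun x =>
    ⟨fun h => by rw [h, map_zero], fun h => e.injective (by rwa [map_zero])⟩
  let E : (GaloisField 2 4 × GaloisField 2 4 × GaloisField 2 4 × GaloisField 2 4) ≃
      (F16 × F16 × F16 × F16) :=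
    e.toEquiv.prodCongr (e.toEquiv.prodCongr (e.toEquiv.prodCongr e.toEquiv))
  have main : ({v : GaloisField 2 4 × GaloisField 2 4 × GaloisField 2 4 × GaloisField 2 4 |
      v ≠ 0 ∧
      (fun (a1 a2 a3 a4 : GaloisField 2 4) =>
        a2^3 + a1*a3^2 + a2^2*a3 + a2^2*a4 + a1^3 + a3^2*a4 + a1^2*a2 + a2*a4^2 = 0 ∧ a1*a2 + a1*a3 + a1*a4 + a2*a4 + (a1 + a3 + a4)^2 = 0) v.1 v.2.1 v.2.2.1 v.2.2.2} : Set _) ≃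
      {v : F16 × F16 × F16 × F16 |
        v ≠ 0 ∧ Cf v.1 v.2.1 v.2.2.1 v.2.2.2 = 0 ∧ Qf v.1 v.2.1 v.2.2.1 v.2.2.2 = 0} := by
    refine Equiv.subtypeEquiv E ?_
    rintro ⟨a1, a2, a3, a4⟩
    have hE : E (a1, a2, a3, a4) = (e a1, e a2, e a3, e a4) := rfl
    simp only [Set.mem_setOf_eq, hE, Cf, Qf, ne_eq]
    refine and_congr (not_congr ?_) (and_congr ?_ ?_)
    · simp only [Prod.mk_eq_zero]
      rw [hz a1, hz a2, hz a3, hz a4]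
    · rw [hz (a2^3 + a1*a3^2 + a2^2*a3 + a2^2*a4 + a1^3 + a3^2*a4 + a1^2*a2 + a2*a4^2)]
      simp only [map_add, map_mul, map_pow]
    · rw [hz (a1*a2 + a1*a3 + a1*a4 + a2*a4 + (a1 + a3 + a4)^2)]
      simp only [map_add, map_mul, map_pow]
  rw [Nat.card_congr main, F16.count60]
end

section
/- The projective curve over F_2 defined by C_1 = 0 and Q_1 + L(0,0,1,1)^2 = 0 has a point of degree at most 3: there exists a nonzero vector (a1,a2,a3,a4) with entries in F_4 or with entries in F_8 satisfying C_1(a1,a2,a3,a4) = 0 and Q_1(a1,a2,a3,a4) + (a3 + a4)^2 = 0. -/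
theorem curve_C1_case_5_has_low_degree_point :
    (∃ a1 a2 a3 a4 : GaloisField 2 2,
      (¬ (a1 = 0 ∧ a2 = 0 ∧ a3 = 0 ∧ a4 = 0)) ∧
      a2^3 + a1*a3^2 + a4^3 + a1^2*a3 + a3*a4^2 = 0 ∧ a1*a2 + a3*a4 + (a3 + a4)^2 = 0) ∨
    (∃ a1 a2 a3 a4 : GaloisField 2 3,
      (¬ (a1 = 0 ∧ a2 = 0 ∧ a3 = 0 ∧ a4 = 0)) ∧
      a2^3 + a1*a3^2 + a4^3 + a1^2*a3 + a3*a4^2 = 0 ∧ a1*a2 + a3*a4 + (a3 + a4)^2 = 0) := by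
  -- (1 : 1 : 0 : 1) is already an F₂-rational point: both equations read 1 + 1 = 0.
  refine .inl ⟨1, 1, 0, 1, fun h => one_ne_zero h.1, ?_, ?_⟩ <;>
    simp [CharTwo.add_self_eq_zero]
end

section
/- The projective curve over F_2 defined by C_1 = 0 and Q_1 + L(0,1,1,1)^2 = 0 has a point of degree at most 3: there exists a nonzero vector (a1,a2,a3,a4) with entries in F_4 or with entries in F_8 satisfying C_1(a1,a2,a3,a4) = 0 and Q_1(a1,a2,a3,a4) + (a2 + a3 + a4)^2 = 0. -/
theorem curve_C1_case_6_has_low_degree_point :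
    (∃ a1 a2 a3 a4 : GaloisField 2 2,
      (¬ (a1 = 0 ∧ a2 = 0 ∧ a3 = 0 ∧ a4 = 0)) ∧
      a2^3 + a1*a3^2 + a4^3 + a1^2*a3 + a3*a4^2 = 0 ∧ a1*a2 + a3*a4 + (a2 + a3 + a4)^2 = 0) ∨
    (∃ a1 a2 a3 a4 : GaloisField 2 3,
      (¬ (a1 = 0 ∧ a2 = 0 ∧ a3 = 0 ∧ a4 = 0)) ∧
      a2^3 + a1*a3^2 + a4^3 + a1^2*a3 + a3*a4^2 = 0 ∧ a1*a2 + a3*a4 + (a2 + a3 + a4)^2 = 0) := by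
  left
  refine ⟨0, 1, 0, 1, ?_, ?_, ?_⟩
  · intro h
    exact one_ne_zero h.2.1
  · have : (2 : GaloisField 2 2) = 0 := by
      simpa using (CharP.cast_eq_zero (GaloisField 2 2) 2)
    ring_nf
    linear_combination this
  · have : (2 : GaloisField 2 2) = 0 := by
      simpa using (CharP.cast_eq_zero (GaloisField 2 2) 2)
    ring_nf
    exact this
end

section
/- The projective curve over F_2 defined by C_1 = 0 and Q_1 + L(1,0,1,1)^2 = 0 has a point of degree at most 3: there exists a nonzero vector (a1,a2,a3,a4) with entries in F_4 or with entries in F_8 satisfying C_1(a1,a2,a3,a4) = 0 and Q_1(a1,a2,a3,a4) + (a1 + a3 + a4)^2 = 0. -/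
theorem curve_C1_case_7_has_low_degree_point :
    (∃ a1 a2 a3 a4 : GaloisField 2 2,
      (¬ (a1 = 0 ∧ a2 = 0 ∧ a3 = 0 ∧ a4 = 0)) ∧
      a2^3 + a1*a3^2 + a4^3 + a1^2*a3 + a3*a4^2 = 0 ∧ a1*a2 + a3*a4 + (a1 + a3 + a4)^2 = 0) ∨
    (∃ a1 a2 a3 a4 : GaloisField 2 3,
      (¬ (a1 = 0 ∧ a2 = 0 ∧ a3 = 0 ∧ a4 = 0)) ∧
      a2^3 + a1*a3^2 + a4^3 + a1^2*a3 + a3*a4^2 = 0 ∧ a1*a2 + a3*a4 + (a1 + a3 + a4)^2 = 0) := by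
  left
  refine ⟨1, 0, 1, 0, ?_, ?_, ?_⟩
  · intro h
    exact one_ne_zero h.1
  · have h2 : (2 : GaloisField 2 2) = 0 := by
      exact_mod_cast CharP.cast_eq_zero (GaloisField 2 2) 2
    ring_nf
    linear_combination h2
  · have h2 : (2 : GaloisField 2 2) = 0 := by
      exact_mod_cast CharP.cast_eq_zero (GaloisField 2 2) 2
    ring_nf
    linear_combination 2 * h2
end

section
/- The projective curve over F_2 defined by C_1 = 0 and Q_1 + L(1,1,0,1)^2 = 0 has a point of degree at most 3: there exists a nonzero vector (a1,a2,a3,a4) with entries in F_4 or with entries in F_8 satisfying C_1(a1,a2,a3,a4) = 0 and Q_1(a1,a2,a3,a4) + (a1 + a2 + a4)^2 = 0. -/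
theorem curve_C1_case_9_has_low_degree_point :
    (∃ a1 a2 a3 a4 : GaloisField 2 2,
      (¬ (a1 = 0 ∧ a2 = 0 ∧ a3 = 0 ∧ a4 = 0)) ∧
      a2^3 + a1*a3^2 + a4^3 + a1^2*a3 + a3*a4^2 = 0 ∧ a1*a2 + a3*a4 + (a1 + a2 + a4)^2 = 0) ∨
    (∃ a1 a2 a3 a4 : GaloisField 2 3,
      (¬ (a1 = 0 ∧ a2 = 0 ∧ a3 = 0 ∧ a4 = 0)) ∧
      a2^3 + a1*a3^2 + a4^3 + a1^2*a3 + a3*a4^2 = 0 ∧ a1*a2 + a3*a4 + (a1 + a2 + a4)^2 = 0) := by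
  left
  refine ⟨1, 1, 0, 1, fun h => one_ne_zero h.1, ?_, ?_⟩
  · ring_nf
    exact CharTwo.two_eq_zero
  · ring_nf
    rw [show (10 : GaloisField 2 2) = 2 * 5 by norm_num]
    exact mul_eq_zero_of_left CharTwo.two_eq_zero 5
end

section
/- The projective curve over F_2 defined by C_2 = 0 and Q_2 + L(1,1,1,1)^2 = 0 has a point of degree at most 3: there exists a nonzero vector (a1,a2,a3,a4) with entries in F_4 or with entries in F_8 satisfying C_2(a1,a2,a3,a4) = 0 and Q_2(a1,a2,a3,a4) + (a1 + a2 + a3 + a4)^2 = 0. -/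
theorem curve_C2_case_15_has_low_degree_point :
    (∃ a1 a2 a3 a4 : GaloisField 2 2,
      (¬ (a1 = 0 ∧ a2 = 0 ∧ a3 = 0 ∧ a4 = 0)) ∧
      a2^3 + a1*a3^2 + a2^2*a3 + a2^2*a4 + a1^3 + a3^2*a4 + a1^2*a2 + a2*a4^2 = 0 ∧ a1*a2 + a1*a3 + a1*a4 + a2*a4 + (a1 + a2 + a3 + a4)^2 = 0) ∨
    (∃ a1 a2 a3 a4 : GaloisField 2 3,
      (¬ (a1 = 0 ∧ a2 = 0 ∧ a3 = 0 ∧ a4 = 0)) ∧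
      a2^3 + a1*a3^2 + a2^2*a3 + a2^2*a4 + a1^3 + a3^2*a4 + a1^2*a2 + a2*a4^2 = 0 ∧ a1*a2 + a1*a3 + a1*a4 + a2*a4 + (a1 + a2 + a3 + a4)^2 = 0) := by
  left
  refine ⟨0, 1, 1, 0, ?_, ?_, ?_⟩
  · intro h; exact one_ne_zero h.2.1
  · have h2 : (2 : GaloisField 2 2) = 0 := by
      exact_mod_cast CharP.cast_eq_zero (GaloisField 2 2) 2
    linear_combination h2
  · have h2 : (2 : GaloisField 2 2) = 0 := by
      exact_mod_cast CharP.cast_eq_zero (GaloisField 2 2) 2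
    linear_combination 2 * h2
end

section
/- The projective curve over F_2 defined by C_4 = 0 and Q_4 + L(0,1,1,0)^2 = 0 has a point of degree at most 3: there exists a nonzero vector (a1,a2,a3,a4) with entries in F_4 or with entries in F_8 satisfying C_4(a1,a2,a3,a4) = 0 and Q_4(a1,a2,a3,a4) + (a2 + a3)^2 = 0. -/
lemma gf4_ex : ∃ t : GaloisField 2 2, t^2 + t + 1 = 0 := by
  have : Fintype (GaloisField 2 2) := Fintype.ofFinite _
  have : Fintype (GaloisField 2 2)ˣ := Fintype.ofFinite _
  have hcard : Fintype.card (GaloisField 2 2) = 4 := by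
    rw [← Nat.card_eq_fintype_card, GaloisField.card 2 2 (by norm_num)]; norm_num
  have hu : Fintype.card (GaloisField 2 2)ˣ = 3 := by
    rw [Fintype.card_eq_nat_card, Nat.card_units, Nat.card_eq_fintype_card, hcard]
  obtain ⟨g, hg⟩ := exists_prime_orderOf_dvd_card (G := (GaloisField 2 2)ˣ) 3 (by rw [hu])
  refine ⟨(g : GaloisField 2 2), ?_⟩
  have hg3 : (g : GaloisField 2 2)^3 = 1 := by
    have h := pow_orderOf_eq_one g
    rw [hg] at h
    have := congrArg Units.val h
    push_cast at this
    exact this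
  have hg1 : (g : GaloisField 2 2) ≠ 1 := by
    intro h
    have : g = 1 := Units.ext h
    rw [this, orderOf_one] at hg
    norm_num at hg
  have hc : (2 : GaloisField 2 2) = 0 := by
    exact_mod_cast CharP.cast_eq_zero (GaloisField 2 2) 2
  have hfac : ((g : GaloisField 2 2) - 1) * ((g:GaloisField 2 2)^2 + g + 1) = 0 := by
    linear_combination hg3
  rcases mul_eq_zero.mp hfac with h | h
  · exact absurd (by linear_combination h) hg1
  · exact h

theorem curve_C4_case_18_has_low_degree_point :
    (∃ a1 a2 a3 a4 : GaloisField 2 2,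
      (¬ (a1 = 0 ∧ a2 = 0 ∧ a3 = 0 ∧ a4 = 0)) ∧
      a1^3 + a1^2*a3 + a1*a4^2 + a2^2*a4 + a2*a4^2 + a3^3 + a3*a4^2 + a4^3 = 0 ∧ a1*a4 + a2*a3 + a3*a4 + (a2 + a3)^2 = 0) ∨
    (∃ a1 a2 a3 a4 : GaloisField 2 3,
      (¬ (a1 = 0 ∧ a2 = 0 ∧ a3 = 0 ∧ a4 = 0)) ∧
      a1^3 + a1^2*a3 + a1*a4^2 + a2^2*a4 + a2*a4^2 + a3^3 + a3*a4^2 + a4^3 = 0 ∧ a1*a4 + a2*a3 + a3*a4 + (a2 + a3)^2 = 0) := by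
  obtain ⟨t, ht⟩ := gf4_ex
  have hc : (2 : GaloisField 2 2) = 0 := by
    exact_mod_cast CharP.cast_eq_zero (GaloisField 2 2) 2
  left
  refine ⟨t, 0, 1, t, ?_, ?_, ?_⟩
  · rintro ⟨-, -, h, -⟩
    exact one_ne_zero h
  · linear_combination (t + 1) * ht + (t^3 - t) * hc
  · linear_combination ht
end
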